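/- arXiv:2602.24275 — 4 statements merged into one kernel-verified Lean document; each statement's English description precedes it below -/
import Mathlib

section
/- Let C, V, E, Ĉ, V̂, Ê, W be types with V, E, V̂, Ê nonempty. Let f₋, f₊ : C × V × E → W and f̂₋, f̂₊ : Ĉ × V̂ × Ê → W be injective maps, and suppose the induced blockwise maps f : C × V × V × E × E → W × W and f̂ : Ĉ × V̂ × V̂ × Ê × Ê → W × W, defined by f(c, v₋, v₊, e₋, e₊) = (f₋(c, v₋, e₋), f₊(c, v₊, e₊)) and analogously for f̂, are both bijective. Then there exists a bijection g : C → Ĉ such that for every (c, v₋, v₊, e₋, e₊) the Ĉ-component of (f̂⁻¹ ∘ f)(c, v₋, v₊, e₋, e₊) equals g(c); in particular the component c is block-wise identifiable: the estimated ĉ is an invertible function of the true c alone. -/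
/-- **Block-wise identifiability of the latent action component (set-level version).**
Let `C, V, E, Ch, Vh, Eh, W` be types with `V, E, Vh, Eh` nonempty.  Let
`fm, fp : C × V × E → W` and `fhm, fhp : Ch × Vh × Eh → W` be injective maps, and suppose the
induced blockwise maps `f : C × V × V × E × E → W × W` and `fh : Ch × Vh × Vh × Eh × Eh → W × W`,
defined by `f (c, vm, vp, em, ep) = (fm (c, vm, em), fp (c, vp, ep))` and analogously for `fh`,
are both bijective.  Then there exists a bijection `g : C → Ch` such that for every
`(c, vm, vp, em, ep)` the `Ch`-component of `(fh⁻¹ ∘ f) (c, vm, vp, em, ep)` equals `g c`. -/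
theorem blockwise_identifiability_set_level
    {C V E Ch Vh Eh W : Type*}
    [Nonempty V] [Nonempty E] [Nonempty Vh] [Nonempty Eh]
    (fm fp : C × V × E → W) (fhm fhp : Ch × Vh × Eh → W)
    (hfm : Function.Injective fm) (hfp : Function.Injective fp)
    (hfhm : Function.Injective fhm) (hfhp : Function.Injective fhp)
    (f : C × V × V × E × E → W × W) (fh : Ch × Vh × Vh × Eh × Eh → W × W)
    (hf_def : ∀ c vm vp em ep, f (c, vm, vp, em, ep) = (fm (c, vm, em), fp (c, vp, ep)))
    (hfh_def : ∀ ch vhm vhp ehm ehp,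
      fh (ch, vhm, vhp, ehm, ehp) = (fhm (ch, vhm, ehm), fhp (ch, vhp, ehp)))
    (hf : Function.Bijective f) (hfh : Function.Bijective fh) :
    ∃ g : C → Ch, Function.Bijective g ∧
      ∀ c vm vp em ep,
        ((Equiv.ofBijective fh hfh).symm (f (c, vm, vp, em, ep))).1 = g c := by
  classical
  set ef := Equiv.ofBijective f hf with hef
  set efh := Equiv.ofBijective fh hfh with hefh
  have hef_app : ∀ x, ef x = f x := fun _ => rfl
  have hefh_app : ∀ y, efh y = fh y := fun _ => rfl
  -- h : true latents ≃ estimated latents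
  set h : (C × V × V × E × E) ≃ (Ch × Vh × Vh × Eh × Eh) := ef.trans efh.symm with hh
  have hfh_h : ∀ x, fh (h x) = f x := by
    intro x
    have : efh (h x) = f x := by simp [hh, hef_app]
    simpa [hefh_app] using this
  have hf_hsymm : ∀ y, f (h.symm y) = fh y := by
    intro y
    have : ef (h.symm y) = fh y := by simp [hh, hefh_app]
    simpa [hef_app] using this
  -- decompose a point of the product into components
  have hsplit : ∀ x : C × V × V × E × E, x = (x.1, x.2.1, x.2.2.1, x.2.2.2.1, x.2.2.2.2) := by
    intro x; rfl
  have hsplit' : ∀ x : Ch × Vh × Vh × Eh × Eh,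
      x = (x.1, x.2.1, x.2.2.1, x.2.2.2.1, x.2.2.2.2) := by
    intro x; rfl
  -- key invariance lemma: first component of h x depends only on x.1
  have key : ∀ x x' : C × V × V × E × E, x.1 = x'.1 → (h x).1 = (h x').1 := by
    -- step A: if c, vp, ep agree then (h x).1 = (h x').1
    have stepA : ∀ (c : C) (vm vm' vp : V) (em em' ep : E),
        (h (c, vm, vp, em, ep)).1 = (h (c, vm', vp, em', ep)).1 := by
      intro c vm vm' vp em em' ep
      set y := h (c, vm, vp, em, ep) with hy
      set y' := h (c, vm', vp, em', ep) with hy'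
      have h1 : fh y = f (c, vm, vp, em, ep) := hfh_h _
      have h2 : fh y' = f (c, vm', vp, em', ep) := hfh_h _
      rw [hsplit' y] at h1
      rw [hsplit' y'] at h2
      rw [hfh_def, hf_def] at h1 h2
      have hsnd : fhp (y.1, y.2.2.1, y.2.2.2.2) = fhp (y'.1, y'.2.2.1, y'.2.2.2.2) := by
        have e1 := congrArg Prod.snd h1
        have e2 := congrArg Prod.snd h2
        simp only at e1 e2
        rw [e1, e2]
      exact (Prod.ext_iff.mp (hfhp hsnd)).1
    -- step B: if c, vm, em agree then (h x).1 = (h x').1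
    have stepB : ∀ (c : C) (vm vp vp' : V) (em ep ep' : E),
        (h (c, vm, vp, em, ep)).1 = (h (c, vm, vp', em, ep')).1 := by
      intro c vm vp vp' em ep ep'
      set y := h (c, vm, vp, em, ep) with hy
      set y' := h (c, vm, vp', em, ep') with hy'
      have h1 : fh y = f (c, vm, vp, em, ep) := hfh_h _
      have h2 : fh y' = f (c, vm, vp', em, ep') := hfh_h _
      rw [hsplit' y] at h1
      rw [hsplit' y'] at h2
      rw [hfh_def, hf_def] at h1 h2
      have hfst : fhm (y.1, y.2.1, y.2.2.2.1) = fhm (y'.1, y'.2.1, y'.2.2.2.1) := by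
        have e1 := congrArg Prod.fst h1
        have e2 := congrArg Prod.fst h2
        simp only at e1 e2
        rw [e1, e2]
      exact (Prod.ext_iff.mp (hfhm hfst)).1
    intro x x' hcc
    obtain ⟨c, vm, vp, em, ep⟩ := x
    obtain ⟨c', vm', vp', em', ep'⟩ := x'
    cases hcc
    calc (h (c, vm, vp, em, ep)).1
        = (h (c, vm, vp', em, ep')).1 := stepB c vm vp vp' em ep ep'
      _ = (h (c, vm', vp', em', ep')).1 := stepA c vm vm' vp' em em' ep'
  -- symmetric invariance for h.symm
  have key' : ∀ y y' : Ch × Vh × Vh × Eh × Eh, y.1 = y'.1 → (h.symm y).1 = (h.symm y').1 := by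
    have stepA : ∀ (c : Ch) (vm vm' vp : Vh) (em em' ep : Eh),
        (h.symm (c, vm, vp, em, ep)).1 = (h.symm (c, vm', vp, em', ep)).1 := by
      intro c vm vm' vp em em' ep
      set y := h.symm (c, vm, vp, em, ep) with hy
      set y' := h.symm (c, vm', vp, em', ep) with hy'
      have h1 : f y = fh (c, vm, vp, em, ep) := hf_hsymm _
      have h2 : f y' = fh (c, vm', vp, em', ep) := hf_hsymm _
      rw [hsplit y] at h1
      rw [hsplit y'] at h2
      rw [hf_def, hfh_def] at h1 h2
      have hsnd : fp (y.1, y.2.2.1, y.2.2.2.2) = fp (y'.1, y'.2.2.1, y'.2.2.2.2) := by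
        have e1 := congrArg Prod.snd h1
        have e2 := congrArg Prod.snd h2
        simp only at e1 e2
        rw [e1, e2]
      exact (Prod.ext_iff.mp (hfp hsnd)).1
    have stepB : ∀ (c : Ch) (vm vp vp' : Vh) (em ep ep' : Eh),
        (h.symm (c, vm, vp, em, ep)).1 = (h.symm (c, vm, vp', em, ep')).1 := by
      intro c vm vp vp' em ep ep'
      set y := h.symm (c, vm, vp, em, ep) with hy
      set y' := h.symm (c, vm, vp', em, ep') with hy'
      have h1 : f y = fh (c, vm, vp, em, ep) := hf_hsymm _
      have h2 : f y' = fh (c, vm, vp', em, ep') := hf_hsymm _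
      rw [hsplit y] at h1
      rw [hsplit y'] at h2
      rw [hf_def, hfh_def] at h1 h2
      have hfst : fm (y.1, y.2.1, y.2.2.2.1) = fm (y'.1, y'.2.1, y'.2.2.2.1) := by
        have e1 := congrArg Prod.fst h1
        have e2 := congrArg Prod.fst h2
        simp only at e1 e2
        rw [e1, e2]
      exact (Prod.ext_iff.mp (hfm hfst)).1
    intro y y' hcc
    obtain ⟨c, vm, vp, em, ep⟩ := y
    obtain ⟨c', vm', vp', em', ep'⟩ := y'
    cases hcc
    calc (h.symm (c, vm, vp, em, ep)).1
        = (h.symm (c, vm, vp', em, ep')).1 := stepB c vm vp vp' em ep ep'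
      _ = (h.symm (c, vm', vp', em', ep')).1 := stepA c vm vm' vp' em em' ep'
  obtain ⟨v0⟩ := ‹Nonempty V›
  obtain ⟨e0⟩ := ‹Nonempty E›
  obtain ⟨vh0⟩ := ‹Nonempty Vh›
  obtain ⟨eh0⟩ := ‹Nonempty Eh›
  set g : C → Ch := fun c => (h (c, v0, v0, e0, e0)).1 with hg
  set g' : Ch → C := fun ch => (h.symm (ch, vh0, vh0, eh0, eh0)).1 with hg'
  have hgg' : Function.LeftInverse g' g := by
    intro c
    have h1 : (h.symm (g c, vh0, vh0, eh0, eh0)).1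
        = (h.symm (h (c, v0, v0, e0, e0))).1 := key' _ _ rfl
    simpa [hg, hg'] using h1
  have hg'g : Function.RightInverse g' g := by
    intro ch
    have h1 : (h (g' ch, v0, v0, e0, e0)).1
        = (h (h.symm (ch, vh0, vh0, eh0, eh0))).1 := key _ _ rfl
    simpa [hg, hg'] using h1
  refine ⟨g, ⟨hgg'.injective, hg'g.surjective⟩, ?_⟩
  intro c vm vp em ep
  have : (h (c, vm, vp, em, ep)).1 = (h (c, v0, v0, e0, e0)).1 := key _ _ rfl
  simpa [hh, hef_app, hg] using this
end

section
/- Let C, V, E, Ĉ, V̂, Ê, W be real normed vector spaces. Let f₋, f₊ : C × V × E → W and f̂₋, f̂₊ : Ĉ × V̂ × Ê → W be Fréchet differentiable maps whose Fréchet derivative is injective at every point. Suppose the induced blockwise maps f : C × V × V × E × E → W × W and f̂ : Ĉ × V̂ × V̂ × Ê × Ê → W × W, defined by f(c, v₋, v₊, e₋, e₊) = (f₋(c, v₋, e₋), f₊(c, v₊, e₊)) and analogously for f̂, are both bijective, and that h := f̂⁻¹ ∘ f and h⁻¹ = f⁻¹ ∘ f̂ are Fréchet differentiable. Then there exists a bijection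 g : C → Ĉ such that for every (c, v₋, v₊, e₋, e₊) the Ĉ-component of h(c, v₋, v₊, e₋, e₊) equals g(c). -/
private lemma aux_const_of_comp {α β γ : Type*}
    [NormedAddCommGroup α] [NormedSpace ℝ α]
    [NormedAddCommGroup β] [NormedSpace ℝ β]
    [NormedAddCommGroup γ] [NormedSpace ℝ γ]
    (F : α → β) (G : β → γ) (hF : Differentiable ℝ F) (hG : Differentiable ℝ G)
    (hGinj : ∀ y, Function.Injective (fderiv ℝ G y))
    (k : γ) (hconst : ∀ x, G (F x) = k) : ∀ x y, F x = F y := by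
  apply is_const_of_fderiv_eq_zero hF
  intro x
  have h1 : fderiv ℝ (G ∘ F) x = (fderiv ℝ G (F x)).comp (fderiv ℝ F x) :=
    fderiv_comp x (hG _) (hF x)
  have h2 : (G ∘ F) = fun _ => k := funext hconst
  have h3 : fderiv ℝ (G ∘ F) x = 0 := by rw [h2]; exact fderiv_const_apply k
  ext v
  apply hGinj (F x)
  have : (fderiv ℝ G (F x)) ((fderiv ℝ F x) v) = 0 := by
    have := h1 ▸ h3
    calc (fderiv ℝ G (F x)) ((fderiv ℝ F x) v)
        = ((fderiv ℝ G (F x)).comp (fderiv ℝ F x)) v := rfl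
      _ = (0 : α →L[ℝ] γ) v := by rw [← this]
      _ = 0 := rfl
  simp [this]

private lemma aux_key {C V E Ch Vh Eh W : Type*}
    [NormedAddCommGroup C] [NormedSpace ℝ C]
    [NormedAddCommGroup V] [NormedSpace ℝ V]
    [NormedAddCommGroup E] [NormedSpace ℝ E]
    [NormedAddCommGroup Ch] [NormedSpace ℝ Ch]
    [NormedAddCommGroup Vh] [NormedSpace ℝ Vh]
    [NormedAddCommGroup Eh] [NormedSpace ℝ Eh]
    [NormedAddCommGroup W] [NormedSpace ℝ W]
    (fm fp : C × V × E → W) (fhm fhp : Ch × Vh × Eh → W)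
    (hfhm_diff : Differentiable ℝ fhm) (hfhp_diff : Differentiable ℝ fhp)
    (hfhm_inj : ∀ x, Function.Injective (fderiv ℝ fhm x))
    (hfhp_inj : ∀ x, Function.Injective (fderiv ℝ fhp x))
    (fh : Ch × Vh × Vh × Eh × Eh → W × W)
    (hfh_def : ∀ ch vhm vhp ehm ehp,
      fh (ch, vhm, vhp, ehm, ehp) = (fhm (ch, vhm, ehm), fhp (ch, vhp, ehp)))
    (h : C × V × V × E × E → Ch × Vh × Vh × Eh × Eh)
    (hh_diff : Differentiable ℝ h)
    (hcomp : ∀ c vm vp em ep,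
      fh (h (c, vm, vp, em, ep)) = (fm (c, vm, em), fp (c, vp, ep))) :
    ∀ c vm vp em ep, (h (c, vm, vp, em, ep)).1 = (h (c, 0, 0, 0, 0)).1 := by
  have fh_fst : ∀ y : Ch × Vh × Vh × Eh × Eh, fhm (y.1, y.2.1, y.2.2.2.1) = (fh y).1 := by
    rintro ⟨a, b, c, d, e⟩; rw [hfh_def]
  have fh_snd : ∀ y : Ch × Vh × Vh × Eh × Eh, fhp (y.1, y.2.2.1, y.2.2.2.2) = (fh y).2 := by
    rintro ⟨a, b, c, d, e⟩; rw [hfh_def]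
  intro c vm vp em ep
  -- Step 1: constant in (vp, ep)
  have step1 : ∀ vm' em' (vp' : V) (ep' : E),
      (h (c, vm', vp', em', ep')).1 = (h (c, vm', 0, em', 0)).1 := by
    intro vm' em' vp' ep'
    set e : V × E → C × V × V × E × E := fun p => (c, vm', p.1, em', p.2) with he
    have he_diff : Differentiable ℝ e :=
      (differentiable_const c).prodMk ((differentiable_const vm').prodMk
        (differentiable_fst.prodMk ((differentiable_const em').prodMk differentiable_snd)))
    have hhe : Differentiable ℝ (fun p => h (e p)) := hh_diff.comp he_diff
    set F : V × E → Ch × Vh × Eh := fun p =>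
      ((h (e p)).1, (h (e p)).2.1, (h (e p)).2.2.2.1) with hF
    have hF_diff : Differentiable ℝ F :=
      hhe.fst.prodMk (hhe.snd.fst.prodMk hhe.snd.snd.snd.fst)
    have hconst : ∀ p : V × E, fhm (F p) = fm (c, vm', em') := by
      intro p
      have := fh_fst (h (e p))
      rw [hF]; dsimp only
      rw [this]
      have := hcomp c vm' p.1 em' p.2
      rw [he]; dsimp only
      rw [this]
    have := aux_const_of_comp F fhm hF_diff hfhm_diff hfhm_inj _ hconst (vp', ep') (0, 0)
    have := congrArg Prod.fst this
    simpa [hF, he] using this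
  -- Step 2: constant in (vm, em)
  have step2 : ∀ (vm' : V) (em' : E),
      (h (c, vm', 0, em', 0)).1 = (h (c, 0, 0, 0, 0)).1 := by
    intro vm' em'
    set e : V × E → C × V × V × E × E := fun p => (c, p.1, 0, p.2, 0) with he
    have he_diff : Differentiable ℝ e :=
      (differentiable_const c).prodMk (differentiable_fst.prodMk
        ((differentiable_const (0 : V)).prodMk (differentiable_snd.prodMk (differentiable_const (0 : E)))))
    have hhe : Differentiable ℝ (fun p => h (e p)) := hh_diff.comp he_diff
    set F : V × E → Ch × Vh × Eh := fun p =>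
      ((h (e p)).1, (h (e p)).2.2.1, (h (e p)).2.2.2.2) with hF
    have hF_diff : Differentiable ℝ F :=
      hhe.fst.prodMk (hhe.snd.snd.fst.prodMk hhe.snd.snd.snd.snd)
    have hconst : ∀ p : V × E, fhp (F p) = fp (c, 0, 0) := by
      intro p
      have := fh_snd (h (e p))
      rw [hF]; dsimp only
      rw [this]
      have := hcomp c p.1 0 p.2 0
      rw [he]; dsimp only
      rw [this]
    have := aux_const_of_comp F fhp hF_diff hfhp_diff hfhp_inj _ hconst (vm', em') (0, 0)
    have := congrArg Prod.fst this
    simpa [hF, he] using this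
  rw [step1 vm em vp ep, step2 vm em]
/-- **Block-wise identifiability of latent action variables (Theorem 2).**
Let `C, V, E, Ch, Vh, Eh, W` be real normed vector spaces.  Let `fm, fp : C × V × E → W` and
`fhm, fhp : Ch × Vh × Eh → W` be Fréchet differentiable maps whose Fréchet derivative is
injective at every point.  Suppose the induced blockwise maps `f : C × V × V × E × E → W × W`
and `fh : Ch × Vh × Vh × Eh × Eh → W × W` are both bijective, and that `h := fh⁻¹ ∘ f` and
`h⁻¹ = f⁻¹ ∘ fh` are Fréchet differentiable.  Then there exists a bijection `g : C → Ch` such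
that for every `(c, vm, vp, em, ep)` the `Ch`-component of `h (c, vm, vp, em, ep)` equals
`g c`. -/
theorem blockwise_identifiability_differentiable
    {C V E Ch Vh Eh W : Type*}
    [NormedAddCommGroup C] [NormedSpace ℝ C]
    [NormedAddCommGroup V] [NormedSpace ℝ V]
    [NormedAddCommGroup E] [NormedSpace ℝ E]
    [NormedAddCommGroup Ch] [NormedSpace ℝ Ch]
    [NormedAddCommGroup Vh] [NormedSpace ℝ Vh]
    [NormedAddCommGroup Eh] [NormedSpace ℝ Eh]
    [NormedAddCommGroup W] [NormedSpace ℝ W]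
    (fm fp : C × V × E → W) (fhm fhp : Ch × Vh × Eh → W)
    (hfm_diff : Differentiable ℝ fm) (hfp_diff : Differentiable ℝ fp)
    (hfhm_diff : Differentiable ℝ fhm) (hfhp_diff : Differentiable ℝ fhp)
    (hfm_inj : ∀ x, Function.Injective (fderiv ℝ fm x))
    (hfp_inj : ∀ x, Function.Injective (fderiv ℝ fp x))
    (hfhm_inj : ∀ x, Function.Injective (fderiv ℝ fhm x))
    (hfhp_inj : ∀ x, Function.Injective (fderiv ℝ fhp x))
    (f : C × V × V × E × E → W × W) (fh : Ch × Vh × Vh × Eh × Eh → W × W)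
    (hf_def : ∀ c vm vp em ep, f (c, vm, vp, em, ep) = (fm (c, vm, em), fp (c, vp, ep)))
    (hfh_def : ∀ ch vhm vhp ehm ehp,
      fh (ch, vhm, vhp, ehm, ehp) = (fhm (ch, vhm, ehm), fhp (ch, vhp, ehp)))
    (hf : Function.Bijective f) (hfh : Function.Bijective fh)
    (hh_diff : Differentiable ℝ (fun x => (Equiv.ofBijective fh hfh).symm (f x)))
    (hhinv_diff : Differentiable ℝ (fun y => (Equiv.ofBijective f hf).symm (fh y))) :
    ∃ g : C → Ch, Function.Bijective g ∧
      ∀ c vm vp em ep,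
        ((Equiv.ofBijective fh hfh).symm (f (c, vm, vp, em, ep))).1 = g c := by
  set h : C × V × V × E × E → Ch × Vh × Vh × Eh × Eh :=
    fun x => (Equiv.ofBijective fh hfh).symm (f x) with hh
  set h' : Ch × Vh × Vh × Eh × Eh → C × V × V × E × E :=
    fun y => (Equiv.ofBijective f hf).symm (fh y) with hh'
  have hfh_h : ∀ x, fh (h x) = f x := fun x =>
    (Equiv.ofBijective fh hfh).apply_symm_apply (f x)
  have hf_h' : ∀ y, f (h' y) = fh y := fun y =>
    (Equiv.ofBijective f hf).apply_symm_apply (fh y)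
  have hcomp : ∀ c vm vp em ep,
      fh (h (c, vm, vp, em, ep)) = (fm (c, vm, em), fp (c, vp, ep)) := by
    intro c vm vp em ep; rw [hfh_h, hf_def]
  have hcomp' : ∀ ch vhm vhp ehm ehp,
      f (h' (ch, vhm, vhp, ehm, ehp)) = (fhm (ch, vhm, ehm), fhp (ch, vhp, ehp)) := by
    intro ch vhm vhp ehm ehp; rw [hf_h', hfh_def]
  have P := aux_key fm fp fhm fhp hfhm_diff hfhp_diff hfhm_inj hfhp_inj fh hfh_def
    h hh_diff hcomp
  have P' := aux_key fhm fhp fm fp hfm_diff hfp_diff hfm_inj hfp_inj f hf_def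
    h' hhinv_diff hcomp'
  have hh'h : ∀ x, h' (h x) = x := by
    intro x
    rw [hh']; dsimp only
    rw [hfh_h]
    exact (Equiv.ofBijective f hf).symm_apply_apply x
  have hhh' : ∀ y, h (h' y) = y := by
    intro y
    rw [hh]; dsimp only
    rw [hf_h']
    exact (Equiv.ofBijective fh hfh).symm_apply_apply y
  refine ⟨fun c => (h (c, 0, 0, 0, 0)).1, ?_, ?_⟩
  · have hleft : ∀ c, (h' ((h (c, 0, 0, 0, 0)).1, 0, 0, 0, 0)).1 = c := by
      intro c
      set y := h (c, 0, 0, 0, 0) with hy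
      have : (h' y).1 = (h' (y.1, 0, 0, 0, 0)).1 := P' y.1 y.2.1 y.2.2.1 y.2.2.2.1 y.2.2.2.2
      rw [← this, hy, hh'h]
    have hright : ∀ ch, (h ((h' (ch, 0, 0, 0, 0)).1, 0, 0, 0, 0)).1 = ch := by
      intro ch
      set y := h' (ch, 0, 0, 0, 0) with hy
      have : (h y).1 = (h (y.1, 0, 0, 0, 0)).1 := P y.1 y.2.1 y.2.2.1 y.2.2.2.1 y.2.2.2.2
      rw [← this, hy, hhh']
    exact Function.bijective_iff_has_inverse.mpr
      ⟨fun ch => (h' (ch, 0, 0, 0, 0)).1, hleft, hright⟩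
  · intro c vm vp em ep
    exact P c vm vp em ep
end

section
/- Let C, V, E, Ĉ, V̂, Ê, W be types. Let f₋, f₊ : C × V × E → W be arbitrary maps and f̂₋, f̂₊ : Ĉ × V̂ × Ê → W be maps with f̂₋ injective. Define the blockwise maps f(c, v₋, v₊, e₋, e₊) = (f₋(c, v₋, e₋), f₊(c, v₊, e₊)) and f̂(ĉ, v̂₋, v̂₊, ê₋, ê₊) = (f̂₋(ĉ, v̂₋, ê₋), f̂₊(ĉ, v̂₊, ê₊)), assume f̂ is bijective, and set h := f̂⁻¹ ∘ f. Then the (ĉ, v̂₋, ê₋)-components of h(c, v₋, v₊, e₋, e₊) depend only on (c, v₋, e₋): they are unchanged when (v₊, e₊) is replaced by any other pair (v₊′, e₊′). -/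
/-- **Key intermediate step of Theorem 2.**
Let `fm, fp : C × V × E → W` be arbitrary maps and `fhm, fhp : Ch × Vh × Eh → W` with `fhm`
injective.  Define the blockwise maps `f (c, vm, vp, em, ep) = (fm (c, vm, em), fp (c, vp, ep))`
and `fh (ch, vhm, vhp, ehm, ehp) = (fhm (ch, vhm, ehm), fhp (ch, vhp, ehp))`, assume `fh` is
bijective and set `h := fh⁻¹ ∘ f`.  Then the `(ch, vhm, ehm)`-components of
`h (c, vm, vp, em, ep)` depend only on `(c, vm, em)`: they are unchanged when `(vp, ep)` is
replaced by any other pair `(vp', ep')`.  (The components of `h` are ordered as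
`(ch, vhm, vhp, ehm, ehp)`.) -/
theorem blockwise_components_independent_of_future
    {C V E Ch Vh Eh W : Type*}
    (fm fp : C × V × E → W) (fhm fhp : Ch × Vh × Eh → W)
    (hfhm : Function.Injective fhm)
    (f : C × V × V × E × E → W × W) (fh : Ch × Vh × Vh × Eh × Eh → W × W)
    (hf_def : ∀ c vm vp em ep, f (c, vm, vp, em, ep) = (fm (c, vm, em), fp (c, vp, ep)))
    (hfh_def : ∀ ch vhm vhp ehm ehp,
      fh (ch, vhm, vhp, ehm, ehp) = (fhm (ch, vhm, ehm), fhp (ch, vhp, ehp)))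
    (hfh : Function.Bijective fh) :
    ∀ c vm em vp ep vp' ep',
      (((Equiv.ofBijective fh hfh).symm (f (c, vm, vp, em, ep))).1 =
          ((Equiv.ofBijective fh hfh).symm (f (c, vm, vp', em, ep'))).1) ∧
      (((Equiv.ofBijective fh hfh).symm (f (c, vm, vp, em, ep))).2.1 =
          ((Equiv.ofBijective fh hfh).symm (f (c, vm, vp', em, ep'))).2.1) ∧
      (((Equiv.ofBijective fh hfh).symm (f (c, vm, vp, em, ep))).2.2.2.1 =
          ((Equiv.ofBijective fh hfh).symm (f (c, vm, vp', em, ep'))).2.2.2.1) := by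
  intro c vm em vp ep vp' ep'
  set e := Equiv.ofBijective fh hfh with he
  set a := e.symm (f (c, vm, vp, em, ep)) with ha
  set b := e.symm (f (c, vm, vp', em, ep')) with hb
  have h1 : fh a = f (c, vm, vp, em, ep) := e.apply_symm_apply _
  have h2 : fh b = f (c, vm, vp', em, ep') := e.apply_symm_apply _
  obtain ⟨a1, a2, a3, a4, a5⟩ := a
  obtain ⟨b1, b2, b3, b4, b5⟩ := b
  rw [hfh_def, hf_def] at h1 h2
  have hm : fhm (a1, a2, a4) = fhm (b1, b2, b4) := by
    have := (Prod.mk.injEq _ _ _ _).mp h1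
    have := (Prod.mk.injEq _ _ _ _).mp h2
    simp_all
  have := hfhm hm
  simp_all
end

section
/- Let C, P, Q, C′, P′, Q′ be types with P, Q, P′, Q′ nonempty. Let h : C × P × Q → C′ × P′ × Q′ be a bijection with components h = (h_C, h_P, h_Q), and write h⁻¹ = (k_C, k_P, k_Q). Suppose: (i) the pair (h_C(c, p, q), h_P(c, p, q)) depends only on (c, p), i.e. is unchanged when q is replaced by any q′; (ii) the pair (h_C(c, p, q), h_Q(c, p, q)) depends only on (c, q); (iii) the pair (k_C(c′, p′, q′), k_P(c′, p′, q′)) depends only on (c′, p′); and (iv) the pair (k_C(c′, p′, q′), k_Q(c′, p′, q′)) depends only on (c′, q′). Then there exists a bijection g : C → C′ such that h_C(c, p, q) = g(c) for all (c, p, q). -/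
/-- **Combinatorial core of Theorem 2.**
Let `C, P, Q, C', P', Q'` be types with `P, Q, P', Q'` nonempty, and let
`h : C × P × Q → C' × P' × Q'` be a bijection with components `h = (h_C, h_P, h_Q)` and
inverse components `k = (k_C, k_P, k_Q)`.  Suppose:
(i) the pair `(h_C (c,p,q), h_P (c,p,q))` depends only on `(c, p)`;
(ii) the pair `(h_C (c,p,q), h_Q (c,p,q))` depends only on `(c, q)`;
(iii) the pair `(k_C (c',p',q'), k_P (c',p',q'))` depends only on `(c', p')`;
(iv) the pair `(k_C (c',p',q'), k_Q (c',p',q'))` depends only on `(c', q')`.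
Then there exists a bijection `g : C → C'` with `h_C (c, p, q) = g c` for all `(c, p, q)`. -/
theorem blockwise_identifiability_combinatorial_core
    {C P Q C' P' Q' : Type*} [Nonempty P] [Nonempty Q] [Nonempty P'] [Nonempty Q']
    (h : C × P × Q → C' × P' × Q') (hbij : Function.Bijective h)
    (hi : ∀ (c : C) (p : P) (q q' : Q),
      ((h (c, p, q)).1, (h (c, p, q)).2.1) = ((h (c, p, q')).1, (h (c, p, q')).2.1))
    (hii : ∀ (c : C) (p p' : P) (q : Q),
      ((h (c, p, q)).1, (h (c, p, q)).2.2) = ((h (c, p', q)).1, (h (c, p', q)).2.2))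
    (hiii : ∀ (c' : C') (p' : P') (q' q'' : Q'),
      (((Equiv.ofBijective h hbij).symm (c', p', q')).1,
        ((Equiv.ofBijective h hbij).symm (c', p', q')).2.1) =
      (((Equiv.ofBijective h hbij).symm (c', p', q'')).1,
        ((Equiv.ofBijective h hbij).symm (c', p', q'')).2.1))
    (hiv : ∀ (c' : C') (p' p'' : P') (q' : Q'),
      (((Equiv.ofBijective h hbij).symm (c', p', q')).1,
        ((Equiv.ofBijective h hbij).symm (c', p', q')).2.2) =
      (((Equiv.ofBijective h hbij).symm (c', p'', q')).1,
        ((Equiv.ofBijective h hbij).symm (c', p'', q')).2.2)) :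
    ∃ g : C → C', Function.Bijective g ∧ ∀ (c : C) (p : P) (q : Q), (h (c, p, q)).1 = g c := by
  classical
  obtain ⟨p₀⟩ := ‹Nonempty P›
  obtain ⟨q₀⟩ := ‹Nonempty Q›
  obtain ⟨p₀'⟩ := ‹Nonempty P'›
  obtain ⟨q₀'⟩ := ‹Nonempty Q'›
  set e := Equiv.ofBijective h hbij with he
  -- h_C depends only on c
  have hC : ∀ (c : C) (p : P) (q : Q), (h (c, p, q)).1 = (h (c, p₀, q₀)).1 := by
    intro c p q
    have h1 : (h (c, p, q)).1 = (h (c, p, q₀)).1 := (Prod.ext_iff.mp (hi c p q q₀)).1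
    have h2 : (h (c, p, q₀)).1 = (h (c, p₀, q₀)).1 := (Prod.ext_iff.mp (hii c p p₀ q₀)).1
    rw [h1, h2]
  have hC' : ∀ (c : C) (p : P) (q : Q) (p' : P) (q' : Q),
      (h (c, p, q)).1 = (h (c, p', q')).1 := fun c p q p' q' =>
    (hC c p q).trans (hC c p' q').symm
  -- k_C depends only on c'
  have kC : ∀ (c' : C') (p' : P') (q' : Q'),
      (e.symm (c', p', q')).1 = (e.symm (c', p₀', q₀')).1 := by
    intro c' p' q'
    have h1 : (e.symm (c', p', q')).1 = (e.symm (c', p', q₀')).1 :=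
      (Prod.ext_iff.mp (hiii c' p' q' q₀')).1
    have h2 : (e.symm (c', p', q₀')).1 = (e.symm (c', p₀', q₀')).1 :=
      (Prod.ext_iff.mp (hiv c' p' p₀' q₀')).1
    rw [h1, h2]
  refine ⟨fun c => (h (c, p₀, q₀)).1, ⟨?_, ?_⟩, fun c p q => hC c p q⟩
  · -- injective
    intro c₁ c₂ hcc
    have hcc' : (h (c₁, p₀, q₀)).1 = (h (c₂, p₀, q₀)).1 := hcc
    have key : ∀ c : C, (e.symm ((h (c, p₀, q₀)).1, p₀', q₀')).1 = c := by
      intro c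
      have h1 := kC (h (c, p₀, q₀)).1 (h (c, p₀, q₀)).2.1 (h (c, p₀, q₀)).2.2
      have h2 : (e.symm (h (c, p₀, q₀))).1 = c :=
        congrArg Prod.fst (e.symm_apply_apply (c, p₀, q₀))
      exact h1.symm.trans h2
    have hk := key c₁
    rw [hcc', key c₂] at hk
    exact hk.symm
  · -- surjective
    intro c'
    refine ⟨(e.symm (c', p₀', q₀')).1, ?_⟩
    set x := e.symm (c', p₀', q₀') with hx
    have hex : h x = (c', p₀', q₀') := e.apply_symm_apply (c', p₀', q₀')
    show (h (x.1, p₀, q₀)).1 = c'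
    rw [hC' x.1 p₀ q₀ x.2.1 x.2.2]
    exact congrArg Prod.fst hex
end
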